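/- arXiv:math/0005248 — 2 statements merged into one kernel-verified Lean document; each statement's English description precedes it below -/
import Mathlib

section
/- Let Λ ⊂ ℝ. The pair ([0,1], Λ) is a spectral pair (i.e., {e_λ|_{[0,1]} : λ ∈ Λ} is an orthogonal basis of L²([0,1])) if and only if there exists α ∈ ℝ such that Λ = α + ℤ = { α + n : n ∈ ℤ }. -/
open MeasureTheory

/-- The exponential `e_λ(x) = e^{2πiλx}` on `ℝ`. -/
noncomputable def expFn (l : ℝ) : ℝ → ℂ :=
  fun x => Complex.exp (2 * Real.pi * Complex.I * l * x)

open Classical in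
/-- The element of `L²(Ω)` determined by a function `f : ℝ → ℂ`
(junk value `0` if `f` is not square-integrable on `Ω`). -/
noncomputable def toL2 (Ω : Set ℝ) (f : ℝ → ℂ) : Lp ℂ 2 (volume.restrict Ω) :=
  if h : MemLp f 2 (volume.restrict Ω) then h.toLp f else 0

/-- `(Ω, Λ)` is a spectral pair: the restrictions `e_λ|_Ω`, `λ ∈ Λ`, are pairwise
orthogonal nonzero elements of `L²(Ω)` whose linear span is dense in `L²(Ω)`. -/
def IsSpectralPair (Ω : Set ℝ) (Λ : Set ℝ) : Prop :=
  (∀ l ∈ Λ, toL2 Ω (expFn l) ≠ 0) ∧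
  (∀ l ∈ Λ, ∀ m ∈ Λ, l ≠ m → (inner ℂ (toL2 Ω (expFn l)) (toL2 Ω (expFn m)) : ℂ) = 0) ∧
  Dense (↑(Submodule.span ℂ ((fun l => toL2 Ω (expFn l)) '' Λ)) :
    Set (Lp ℂ 2 (volume.restrict Ω)))

section Aux
open Complex Real Set

lemma norm_expFn (l x : ℝ) : ‖expFn l x‖ = 1 := by
  have : (2 * (Real.pi:ℂ) * Complex.I * l * x) = ((2 * Real.pi * l * x : ℝ) : ℂ) * Complex.I := by
    push_cast; ring
  rw [expFn, this]
  exact Complex.norm_exp_ofReal_mul_I _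

lemma continuous_expFn (l : ℝ) : Continuous (expFn l) := by
  unfold expFn; fun_prop

lemma measure_Icc_eq : (volume.restrict (Set.Icc (0:ℝ) 1)) = volume.restrict (Set.Ioc 0 1) :=
  (Measure.restrict_congr_set Ioc_ae_eq_Icc).symm

instance : IsFiniteMeasure (volume.restrict (Set.Icc (0:ℝ) 1)) := by
  constructor
  rw [Measure.restrict_apply_univ]
  simp

lemma memL2_expFn (l : ℝ) : MemLp (expFn l) 2 (volume.restrict (Set.Icc (0:ℝ) 1)) := by
  have h := memLp_top_of_bound (μ := volume.restrict (Set.Icc (0:ℝ) 1))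
    ((continuous_expFn l).aestronglyMeasurable) 1
    (Filter.Eventually.of_forall fun x => le_of_eq (norm_expFn l x))
  exact MemLp.mono_exponent h le_top

lemma conj_expFn (l x : ℝ) : (starRingEnd ℂ) (expFn l x) = Complex.exp (-(2 * Real.pi * Complex.I * l * x)) := by
  rw [expFn, ← Complex.exp_conj]
  congr 1
  have : (2 * (Real.pi:ℂ) * Complex.I * l * x) = ((2 * Real.pi * l * x : ℝ) : ℂ) * Complex.I := by
    push_cast; ring
  rw [this, map_mul, Complex.conj_I, Complex.conj_ofReal]
  ring

lemma toL2_eq (l : ℝ) : toL2 (Set.Icc 0 1) (expFn l) = (memL2_expFn l).toLp (expFn l) := by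
  rw [toL2, dif_pos (memL2_expFn l)]

lemma inner_toL2 (l m : ℝ) :
    (inner ℂ (toL2 (Set.Icc 0 1) (expFn l)) (toL2 (Set.Icc 0 1) (expFn m)) : ℂ) =
      ∫ x in (0:ℝ)..1, Complex.exp (2 * Real.pi * Complex.I * (m - l) * x) := by
  rw [toL2_eq, toL2_eq, MeasureTheory.L2.inner_def]
  have h1 : ∀ᵐ x ∂(volume.restrict (Set.Icc (0:ℝ) 1)),
      (inner ℂ ((memL2_expFn l).toLp (expFn l) x) ((memL2_expFn m).toLp (expFn m) x) : ℂ)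
        = Complex.exp (2 * Real.pi * Complex.I * (m - l) * x) := by
    filter_upwards [(memL2_expFn l).coeFn_toLp, (memL2_expFn m).coeFn_toLp] with x hl hm
    rw [hl, hm, RCLike.inner_apply, conj_expFn, expFn, ← Complex.exp_add]
    congr 1
    push_cast
    ring
  rw [integral_congr_ae h1, measure_Icc_eq, ← intervalIntegral.integral_of_le zero_le_one]

lemma inner_toL2_self (l : ℝ) :
    (inner ℂ (toL2 (Set.Icc 0 1) (expFn l)) (toL2 (Set.Icc 0 1) (expFn l)) : ℂ) = 1 := by
  rw [inner_toL2]
  simp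

lemma inner_toL2_ne (l m : ℝ) (h : l ≠ m) :
    (inner ℂ (toL2 (Set.Icc 0 1) (expFn l)) (toL2 (Set.Icc 0 1) (expFn m)) : ℂ) =
      (Complex.exp (2 * Real.pi * Complex.I * (m - l)) - 1) /
        (2 * Real.pi * Complex.I * (m - l)) := by
  have hc : (2 * (Real.pi:ℂ) * Complex.I * (m - l)) ≠ 0 := by
    apply mul_ne_zero
    apply mul_ne_zero
    apply mul_ne_zero
    · norm_num
    · exact_mod_cast Real.pi_ne_zero
    · exact Complex.I_ne_zero
    · rw [sub_ne_zero]; exact_mod_cast (Ne.symm h)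
  rw [inner_toL2]
  have : ∀ x : ℝ, Complex.exp (2 * Real.pi * Complex.I * (m - l) * x)
      = Complex.exp ((2 * Real.pi * Complex.I * (m - l)) * x) := fun x => rfl
  rw [integral_exp_mul_complex hc]
  norm_num

lemma toL2_ne_zero (l : ℝ) : toL2 (Set.Icc 0 1) (expFn l) ≠ 0 := by
  intro h
  have := inner_toL2_self l
  rw [h, inner_zero_left] at this
  exact zero_ne_one this

lemma inner_eq_zero_iff (l m : ℝ) (h : l ≠ m) :
    (inner ℂ (toL2 (Set.Icc 0 1) (expFn l)) (toL2 (Set.Icc 0 1) (expFn m)) : ℂ) = 0 ↔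
      ∃ n : ℤ, m - l = (n : ℝ) := by
  have hc : (2 * (Real.pi:ℂ) * Complex.I * (m - l)) ≠ 0 := by
    apply mul_ne_zero (mul_ne_zero (mul_ne_zero (by norm_num)
      (by exact_mod_cast Real.pi_ne_zero)) Complex.I_ne_zero)
    rw [sub_ne_zero]; exact_mod_cast (Ne.symm h)
  rw [inner_toL2_ne l m h, div_eq_zero_iff]
  simp only [hc, or_false, sub_eq_zero]
  rw [Complex.exp_eq_one_iff]
  constructor
  · rintro ⟨n, hn⟩
    refine ⟨n, ?_⟩
    have : ((m:ℂ) - l) = (n:ℂ) := by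
      have h2 : (2 * (Real.pi:ℂ) * Complex.I) ≠ 0 := by
        exact mul_ne_zero (mul_ne_zero (by norm_num) (by exact_mod_cast Real.pi_ne_zero))
          Complex.I_ne_zero
      apply mul_left_cancel₀ h2
      linear_combination hn
    exact_mod_cast this
  · rintro ⟨n, hn⟩
    refine ⟨n, ?_⟩
    have : ((m:ℂ) - l) = (n:ℂ) := by exact_mod_cast hn
    rw [this]; ring

lemma haar_one_eq_volume : (AddCircle.haarAddCircle : Measure (AddCircle (1:ℝ))) = volume := by
  rw [AddCircle.volume_eq_smul_haarAddCircle]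
  simp

lemma complete_aux (α : ℝ) (f : Lp ℂ 2 (volume.restrict (Set.Icc (0:ℝ) 1)))
    (h : ∀ n : ℤ, (inner ℂ (toL2 (Set.Icc 0 1) (expFn (α + n))) f : ℂ) = 0) : f = 0 := by
  haveI : Fact ((0:ℝ) < 1) := ⟨one_pos⟩
  -- the auxiliary function g
  set g : ℝ → ℂ := fun x => (starRingEnd ℂ) (expFn α x) * f x with hg
  have hgsm : StronglyMeasurable g :=
    ((Complex.continuous_conj.comp (continuous_expFn α)).stronglyMeasurable).mul
      (Lp.stronglyMeasurable f)
  have hgnorm : ∀ x, ‖g x‖ = ‖f x‖ := by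
    intro x
    rw [hg]
    simp only [norm_mul, RCLike.norm_conj, norm_expFn, one_mul]
  have hgmem : MemLp g 2 (volume.restrict (Set.Icc (0:ℝ) 1)) := by
    refine MemLp.of_le (Lp.memLp f) hgsm.aestronglyMeasurable ?_
    exact Filter.Eventually.of_forall fun x => le_of_eq (hgnorm x)
  -- inner products as integrals
  have hinner : ∀ n : ℤ, ∫ x, (starRingEnd ℂ) (expFn (α + n) x) * f x ∂(volume.restrict (Set.Icc (0:ℝ) 1)) = 0 := by
    intro n
    have := h n
    rw [toL2_eq, MeasureTheory.L2.inner_def] at this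
    rw [← this]
    apply integral_congr_ae
    filter_upwards [(memL2_expFn (α + n)).coeFn_toLp] with x hx
    rw [RCLike.inner_apply, hx, mul_comm]
  -- pointwise identity
  have hpt : ∀ (n : ℤ) (x : ℝ), (fourier (-n) (x : AddCircle (1:ℝ))) • g x
      = (starRingEnd ℂ) (expFn (α + n) x) * f x := by
    intro n x
    rw [hg, smul_eq_mul, ← mul_assoc, fourier_coe_apply, conj_expFn, conj_expFn,
      ← Complex.exp_add]
    congr 2
    push_cast
    field_simp
    ring
  -- liftIoc g and its Fourier coefficients
  -- liftIoc g is in L²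
  set G : AddCircle (1:ℝ) → ℂ := AddCircle.liftIoc 1 0 g with hG
  have hGm : Measurable G := by
    have : G = (fun y : Set.Ioc (0:ℝ) (0+1) => g y) ∘ (AddCircle.measurableEquivIoc 1 0) := rfl
    rw [this]
    exact (hgsm.measurable.comp measurable_subtype_coe).comp
      (AddCircle.measurableEquivIoc 1 0).measurable
  have hmk := AddCircle.measurePreserving_mk 1 (0:ℝ)
  have hmk' : MeasurePreserving (((↑) : ℝ → AddCircle (1:ℝ)))
      (volume.restrict (Set.Ioc 0 (0+1))) (AddCircle.haarAddCircle) := by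
    rwa [haar_one_eq_volume]
  have hGmk : G ∘ ((↑) : ℝ → AddCircle (1:ℝ)) =ᵐ[volume.restrict (Set.Ioc (0:ℝ) (0+1))] g := by
    filter_upwards [ae_restrict_mem measurableSet_Ioc] with x hx
    exact AddCircle.liftIoc_coe_apply hx
  have hcoeff : ∀ n : ℤ, fourierCoeff G n = 0 := by
    intro n
    rw [fourierCoeff, ← hmk'.map_eq, integral_map hmk'.measurable.aemeasurable
      (by exact ((map_continuous (fourier (-n))).measurable.smul hGm).aestronglyMeasurable)]
    have e1 : ∫ x in Set.Ioc (0:ℝ) (0+1), (fourier (-n) (x : AddCircle (1:ℝ))) • G (x : AddCircle (1:ℝ)) ∂volume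
        = ∫ x in Set.Ioc (0:ℝ) (0+1), (starRingEnd ℂ) (expFn (α + n) x) * f x ∂volume := by
      apply integral_congr_ae
      filter_upwards [hGmk] with x hx
      rw [Function.comp_apply] at hx
      rw [hx, hpt n x]
    rw [e1]
    rw [show Set.Ioc (0:ℝ) (0+1) = Set.Ioc (0:ℝ) 1 by norm_num]
    rw [← integral_Icc_eq_integral_Ioc]
    exact hinner n
  have hGmem : MemLp G 2 (AddCircle.haarAddCircle) := by
    constructor
    · exact hGm.aestronglyMeasurable
    · rw [← eLpNorm_comp_measurePreserving hGm.aestronglyMeasurable hmk']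
      rw [eLpNorm_congr_ae hGmk]
      rw [show Set.Ioc (0:ℝ) (0+1) = Set.Ioc (0:ℝ) 1 by norm_num, ← measure_Icc_eq]
      exact hgmem.2
  -- conclude G = 0 a.e.
  set F := hGmem.toLp G with hF
  have hrepr : ∀ n : ℤ, fourierCoeff (⇑F) n = 0 := by
    intro n
    rw [← hcoeff n]
    apply integral_congr_ae
    filter_upwards [hGmem.coeFn_toLp] with t ht
    rw [ht]
  have hF0 : F = 0 := by
    have : fourierBasis.repr F = 0 := by
      ext n
      rw [fourierBasis_repr, hrepr n]
      rfl
    simpa using (LinearIsometryEquiv.map_eq_zero_iff fourierBasis.repr).mp this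
  have hG0 : G =ᵐ[AddCircle.haarAddCircle] 0 := by
    have h1 : ⇑F =ᵐ[AddCircle.haarAddCircle] G := hGmem.coeFn_toLp
    have h2 : ⇑F =ᵐ[AddCircle.haarAddCircle] 0 := by rw [hF0]; exact Lp.coeFn_zero _ _ _
    exact h1.symm.trans h2
  -- pull back to ℝ
  have hg0 : g =ᵐ[volume.restrict (Set.Ioc (0:ℝ) (0+1))] 0 := by
    have := MeasureTheory.ae_eq_comp (g := G) (g' := (0 : AddCircle (1:ℝ) → ℂ))
      hmk'.measurable.aemeasurable (by rw [hmk'.map_eq]; exact hG0)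
    exact hGmk.symm.trans this
  have hf0 : f =ᵐ[volume.restrict (Set.Icc (0:ℝ) 1)] 0 := by
    rw [show Set.Ioc (0:ℝ) (0+1) = Set.Ioc (0:ℝ) 1 by norm_num, ← measure_Icc_eq] at hg0
    filter_upwards [hg0] with x hx
    rw [hg] at hx
    simp only [Pi.zero_apply, mul_eq_zero, map_eq_zero] at hx ⊢
    rcases hx with h1 | h1
    · exact absurd h1 (Complex.exp_ne_zero _)
    · exact h1
  exact (Lp.eq_zero_iff_ae_eq_zero).mpr hf0

end Aux

/-- `([0,1], Λ)` is a spectral pair if and only if `Λ = α + ℤ` for some `α ∈ ℝ`. -/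
theorem spectralPair_unitInterval_iff (Λ : Set ℝ) :
    IsSpectralPair (Set.Icc 0 1) Λ ↔
      ∃ α : ℝ, Λ = {x : ℝ | ∃ n : ℤ, x = α + n} := by
  constructor
  · rintro ⟨hnz, horth, hdens⟩
    -- Λ is nonempty
    have hne : Λ.Nonempty := by
      by_contra hemp
      rw [Set.not_nonempty_iff_eq_empty] at hemp
      subst hemp
      rw [Set.image_empty, Submodule.span_empty] at hdens
      have h0 : (↑(⊥ : Submodule ℂ (Lp ℂ 2 (volume.restrict (Set.Icc (0:ℝ) 1)))) :
          Set (Lp ℂ 2 (volume.restrict (Set.Icc (0:ℝ) 1)))) = {0} := by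
        ext x; simp [Submodule.mem_bot]
      rw [h0] at hdens
      have := hdens.closure_eq
      rw [closure_singleton] at this
      exact toL2_ne_zero 0 (by
        have : toL2 (Set.Icc 0 1) (expFn 0) ∈ ({0} : Set (Lp ℂ 2 (volume.restrict (Set.Icc (0:ℝ) 1)))) := by
          rw [this]; trivial
        simpa using this)
    obtain ⟨α, hα⟩ := hne
    refine ⟨α, ?_⟩
    have hsub : Λ ⊆ {x : ℝ | ∃ n : ℤ, x = α + n} := by
      intro m hm
      by_cases hma : m = α
      · exact ⟨0, by simp [hma]⟩
      · obtain ⟨n, hn⟩ := (inner_eq_zero_iff α m (Ne.symm hma)).mp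
          (horth α hα m hm (Ne.symm hma))
        exact ⟨n, by linarith⟩
    apply Set.Subset.antisymm hsub
    rintro x ⟨n, rfl⟩
    by_contra hx
    -- v := toL2 (expFn (α + n)) is orthogonal to everything
    set v := toL2 (Set.Icc 0 1) (expFn (α + n)) with hv
    have hOrtho : ∀ u ∈ ((fun l => toL2 (Set.Icc 0 1) (expFn l)) '' Λ),
        (inner ℂ u v : ℂ) = 0 := by
      rintro u ⟨l, hl, rfl⟩
      have hlx : l ≠ α + n := fun hc => hx (hc ▸ hl)
      obtain ⟨k, hk⟩ := hsub hl
      refine (inner_eq_zero_iff l (α + n) hlx).mpr ⟨n - k, ?_⟩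
      rw [hk]; push_cast; ring
    have hvmem : v ∈ (Submodule.span ℂ
        ((fun l => toL2 (Set.Icc 0 1) (expFn l)) '' Λ))ᗮ := by
      have hOS : Submodule.span ℂ ((fun l => toL2 (Set.Icc 0 1) (expFn l)) '' Λ) ⟂
          Submodule.span ℂ {v} := by
        rw [Submodule.isOrtho_span]
        rintro u hu w (rfl : w = v)
        exact hOrtho u hu
      exact hOS.symm (Submodule.mem_span_singleton_self v)
    rw [Submodule.dense_iff_topologicalClosure_eq_top,
      Submodule.topologicalClosure_eq_top_iff] at hdens
    rw [hdens, Submodule.mem_bot] at hvmem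
    exact toL2_ne_zero (α + n) hvmem
  · rintro ⟨α, rfl⟩
    refine ⟨fun l _ => toL2_ne_zero l, fun l hl m hm hlm => ?_, ?_⟩
    · obtain ⟨k, rfl⟩ := hl
      obtain ⟨j, rfl⟩ := hm
      refine (inner_eq_zero_iff _ _ hlm).mpr ⟨j - k, ?_⟩
      push_cast; ring
    · rw [Submodule.dense_iff_topologicalClosure_eq_top,
        Submodule.topologicalClosure_eq_top_iff]
      rw [Submodule.eq_bot_iff]
      intro f hf
      rw [Submodule.mem_orthogonal] at hf
      apply complete_aux α f
      intro n
      refine hf _ (Submodule.subset_span ?_)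
      exact Set.mem_image_of_mem _ (show (α + (n:ℝ)) ∈ {x : ℝ | ∃ k : ℤ, x = α + k} from ⟨n, rfl⟩)
end

section
/- Let d ≥ 1, α ∈ ℝ, and for each j = 2, …, d let β_j : ℤ^{j−1} → [0,1) be an arbitrary function. Set Λ = { (α + k_1, β_2(k_1) + k_2, …, β_d(k_1,…,k_{d−1}) + k_d) : k_1, …, k_d ∈ ℤ } ⊂ ℝ^d. Then Λ is a set of translations making the unit cube tile ℝ^d: the translates { λ + [0,1)^d : λ ∈ Λ } cover ℝ^d up to a Lebesgue null set, and for distinct λ, λ' ∈ Λ the intersection (λ + [0,1)^d) ∩ (λ' + [0,1)^d) has Lebesgue measure zero. -/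
open MeasureTheory

def unitCubeHalfOpen (d : ℕ) : Set (Fin d → ℝ) := Set.univ.pi fun _ => Set.Ico (0 : ℝ) 1

def TilesRd {d : ℕ} (Λ : Set (Fin d → ℝ)) : Prop :=
  volume ((Set.univ : Set (Fin d → ℝ)) \
      ⋃ l ∈ Λ, (fun x => l + x) '' unitCubeHalfOpen d) = 0 ∧
  ∀ l ∈ Λ, ∀ l' ∈ Λ, l ≠ l' →
    volume (((fun x => l + x) '' unitCubeHalfOpen d) ∩
      ((fun x => l' + x) '' unitCubeHalfOpen d)) = 0

def staircase {d : ℕ} (α : ℝ) (β : (j : Fin d) → (Fin (j : ℕ) → ℤ) → ℝ) :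
    Set (Fin d → ℝ) :=
  {l : Fin d → ℝ | ∃ k : Fin d → ℤ, ∀ j : Fin d,
    l j = (if (j : ℕ) = 0 then α
           else β j (fun i => k (Fin.castLE j.isLt.le i))) + k j}

namespace StaircaseAux

variable {d : ℕ}

/-- Recursively constructed integer prefix vector. -/
noncomputable def g (α : ℝ) (β : (j : Fin d) → (Fin (j : ℕ) → ℤ) → ℝ) (x : Fin d → ℝ) :
    (n : ℕ) → n ≤ d → (Fin n → ℤ)
  | 0, _ => Fin.elim0
  | (n+1), h =>
      Fin.snoc (g α β x n (Nat.le_of_succ_le h))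
        ⌊x ⟨n, h⟩ - (if n = 0 then α
          else β ⟨n, h⟩ (fun i => g α β x n (Nat.le_of_succ_le h) i))⌋

lemma g_compat (α : ℝ) (β : (j : Fin d) → (Fin (j : ℕ) → ℤ) → ℝ) (x : Fin d → ℝ) :
    ∀ (m : ℕ) (hm : m ≤ d) (n : ℕ) (h : n ≤ m) (i : Fin n),
      g α β x m hm (Fin.castLE h i) = g α β x n (h.trans hm) i := by
  intro m
  induction m with
  | zero =>
    intro hm n h i
    interval_cases n
    exact i.elim0
  | succ m ih =>
    intro hm n h i
    rcases Nat.lt_or_ge n (m+1) with h' | h'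
    · have h'' : n ≤ m := Nat.lt_succ_iff.mp h'
      have hcast : Fin.castLE h i = Fin.castSucc (Fin.castLE h'' i) := rfl
      rw [hcast]
      show Fin.snoc _ _ _ = _
      rw [Fin.snoc_castSucc]
      exact ih _ _ h'' _
    · have hn : n = m+1 := le_antisymm h h'
      subst hn
      have : Fin.castLE h i = i := Fin.ext rfl
      rw [this]

noncomputable def kfun (α : ℝ) (β : (j : Fin d) → (Fin (j : ℕ) → ℤ) → ℝ)
    (x : Fin d → ℝ) : Fin d → ℤ := g α β x d le_rfl

/-- The "shift" value in coordinate `j` determined by a prefix integer vector. -/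
def cval (α : ℝ) (β : (j : Fin d) → (Fin (j : ℕ) → ℤ) → ℝ) (k : Fin d → ℤ)
    (j : Fin d) : ℝ :=
  if (j : ℕ) = 0 then α else β j (fun i => k (Fin.castLE j.isLt.le i))

lemma kfun_prefix (α : ℝ) (β : (j : Fin d) → (Fin (j : ℕ) → ℤ) → ℝ) (x : Fin d → ℝ)
    (n : ℕ) (hn : n ≤ d) (i : Fin n) :
    kfun α β x (Fin.castLE hn i) = g α β x n hn i := by
  unfold kfun
  rw [g_compat]

lemma kfun_spec (α : ℝ) (β : (j : Fin d) → (Fin (j : ℕ) → ℤ) → ℝ) (x : Fin d → ℝ)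
    (j : Fin d) :
    kfun α β x j = ⌊x j - cval α β (kfun α β x) j⌋ := by
  obtain ⟨n, hn⟩ := j
  have hsucc : n + 1 ≤ d := hn
  have hj : (⟨n, hn⟩ : Fin d) = Fin.castLE hsucc (Fin.last n) := Fin.ext rfl
  have h1 : kfun α β x ⟨n, hn⟩ = g α β x (n+1) hsucc (Fin.last n) := by
    rw [hj, kfun_prefix]
  have h2 : g α β x (n+1) hsucc (Fin.last n)
      = ⌊x ⟨n, hn⟩ - (if n = 0 then α
          else β ⟨n, hn⟩ (fun i => g α β x n (Nat.le_of_succ_le hsucc) i))⌋ := by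
    show Fin.snoc _ _ _ = _
    rw [Fin.snoc_last]
  rw [h1, h2]
  congr 2
  unfold cval
  split
  · rfl
  · congr 1
    funext i
    rw [← kfun_prefix α β x n (Nat.le_of_succ_le hsucc) i]

lemma exists_mem (α : ℝ) (β : (j : Fin d) → (Fin (j : ℕ) → ℤ) → ℝ) (x : Fin d → ℝ) :
    ∃ l ∈ staircase α β, ∀ j, x j - l j ∈ Set.Ico (0:ℝ) 1 := by
  set k := kfun α β x with hk
  refine ⟨fun j => cval α β k j + k j, ⟨k, fun j => rfl⟩, ?_⟩
  intro j
  have h := kfun_spec α β x j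
  rw [← hk] at h
  have heq : x j - (cval α β k j + (k j : ℝ))
      = Int.fract (x j - cval α β k j) := by
    rw [Int.fract, ← h]; ring
  rw [heq]
  exact ⟨Int.fract_nonneg _, Int.fract_lt_one _⟩

lemma unique (α : ℝ) (β : (j : Fin d) → (Fin (j : ℕ) → ℤ) → ℝ) (x : Fin d → ℝ)
    {l l' : Fin d → ℝ} (hl : l ∈ staircase α β) (hl' : l' ∈ staircase α β)
    (h : ∀ j, x j - l j ∈ Set.Ico (0:ℝ) 1) (h' : ∀ j, x j - l' j ∈ Set.Ico (0:ℝ) 1) :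
    l = l' := by
  obtain ⟨k, hk⟩ := hl
  obtain ⟨k', hk'⟩ := hl'
  have key : ∀ n : ℕ, ∀ hn : n < d, k ⟨n, hn⟩ = k' ⟨n, hn⟩ := by
    intro n
    induction n using Nat.strong_induction_on with
    | _ n ih =>
      intro hn
      have hc : cval α β k ⟨n, hn⟩ = cval α β k' ⟨n, hn⟩ := by
        unfold cval
        split
        · rfl
        · congr 1
          funext i
          exact ih i.val i.isLt _
      have e1 := h ⟨n, hn⟩
      have e2 := h' ⟨n, hn⟩
      rw [hk ⟨n, hn⟩] at e1
      rw [hk' ⟨n, hn⟩] at e2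
      have e1' : 0 ≤ x ⟨n, hn⟩ - (cval α β k ⟨n, hn⟩ + (k ⟨n, hn⟩ : ℝ)) ∧
          x ⟨n, hn⟩ - (cval α β k ⟨n, hn⟩ + (k ⟨n, hn⟩ : ℝ)) < 1 := e1
      have e2' : 0 ≤ x ⟨n, hn⟩ - (cval α β k' ⟨n, hn⟩ + (k' ⟨n, hn⟩ : ℝ)) ∧
          x ⟨n, hn⟩ - (cval α β k' ⟨n, hn⟩ + (k' ⟨n, hn⟩ : ℝ)) < 1 := e2
      have hlt1 : (k ⟨n, hn⟩ : ℝ) < k' ⟨n, hn⟩ + 1 := by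
        rw [hc] at e1'
        linarith [e1'.1, e1'.2, e2'.1, e2'.2]
      have hlt2 : (k' ⟨n, hn⟩ : ℝ) < k ⟨n, hn⟩ + 1 := by
        rw [hc] at e1'
        linarith [e1'.1, e1'.2, e2'.1, e2'.2]
      have i1 : k ⟨n, hn⟩ < k' ⟨n, hn⟩ + 1 := by exact_mod_cast hlt1
      have i2 : k' ⟨n, hn⟩ < k ⟨n, hn⟩ + 1 := by exact_mod_cast hlt2
      omega
  have hkk : k = k' := by
    funext j
    have := key j.1 j.2
    simpa using this
  funext j
  rw [hk j, hk' j, hkk]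

lemma mem_translate {l x : Fin d → ℝ} :
    x ∈ (fun y => l + y) '' unitCubeHalfOpen d ↔ ∀ j, x j - l j ∈ Set.Ico (0:ℝ) 1 := by
  constructor
  · rintro ⟨y, hy, rfl⟩ j
    have := hy j (Set.mem_univ j)
    simpa using this
  · intro hx
    refine ⟨x - l, fun j _ => hx j, ?_⟩
    funext j
    simp

end StaircaseAux

/-- For `d ≥ 1`, any `α ∈ ℝ` and arbitrary functions `β_j : ℤ^{j−1} → [0,1)`, the
staircase set `Λ` is a set of translations making the unit cube tile `ℝ^d`. -/
theorem staircase_tiles (d : ℕ) (hd : 1 ≤ d) (α : ℝ)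
    (β : (j : Fin d) → (Fin (j : ℕ) → ℤ) → ℝ)
    (hβ : ∀ j : Fin d, (j : ℕ) ≠ 0 → ∀ x, β j x ∈ Set.Ico (0 : ℝ) 1) :
    TilesRd (staircase α β) := by
  constructor
  · have hcov : (Set.univ : Set (Fin d → ℝ)) ⊆
        ⋃ l ∈ staircase α β, (fun x => l + x) '' unitCubeHalfOpen d := by
      intro x _
      obtain ⟨l, hl, hmem⟩ := StaircaseAux.exists_mem α β x
      exact Set.mem_biUnion hl (StaircaseAux.mem_translate.mpr hmem)
    rw [Set.diff_eq_empty.mpr hcov]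
    exact measure_empty
  · intro l hl l' hl' hne
    have : ((fun x => l + x) '' unitCubeHalfOpen d) ∩
        ((fun x => l' + x) '' unitCubeHalfOpen d) = ∅ := by
      rw [Set.eq_empty_iff_forall_notMem]
      rintro x ⟨hx, hx'⟩
      exact hne (StaircaseAux.unique α β x hl hl'
        (StaircaseAux.mem_translate.mp hx) (StaircaseAux.mem_translate.mp hx'))
    rw [this]
    exact measure_empty
end
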